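/- 𝔭 = min{κ_{ωτ}, 𝔱}. -/

import Mathlib

open Cardinal

/-- `A ⊆* B`: `A \ B` is finite. -/
def StarSubset (A B : Set ℕ) : Prop := (A \ B).Finite

/-- A family of sets is centered if the intersection of every nonempty finite
subfamily is infinite (in particular every member is infinite). -/
def Centered (F : Set (Set ℕ)) : Prop :=
  ∀ G : Finset (Set ℕ), ↑G ⊆ F → G.Nonempty → (⋂ A ∈ G, A).Infinite

/-- `F` has a pseudo-intersection: an infinite `A` with `A ⊆* B` for all `B ∈ F`. -/
def HasPseudoIntersection (F : Set (Set ℕ)) : Prop :=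
  ∃ A : Set ℕ, A.Infinite ∧ ∀ B ∈ F, StarSubset A B

/-- `F` is a family of infinite sets linearly quasiordered by `⊆*`. -/
def LinQuasiOrdered (F : Set (Set ℕ)) : Prop :=
  (∀ A ∈ F, A.Infinite) ∧ ∀ A ∈ F, ∀ B ∈ F, StarSubset A B ∨ StarSubset B A

/-- The pseudo-intersection number 𝔭. -/
noncomputable def pNum : Cardinal :=
  sInf { c | ∃ F : Set (Set ℕ), Centered F ∧ ¬ HasPseudoIntersection F ∧ c = #F }

/-- The tower number 𝔱. -/
noncomputable def tNum : Cardinal :=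
  sInf { c | ∃ F : Set (Set ℕ), LinQuasiOrdered F ∧ ¬ HasPseudoIntersection F ∧ c = #F }

/-- The cardinal κ_{ωτ}: minimal cardinality of a centered family `F` such that for
every infinite `A ⊆ ℕ`, the family `{B ∩ A : B ∈ F}` is not a linearly
`⊆*`-quasiordered family of infinite sets. -/
noncomputable def kappaOmegaTau : Cardinal :=
  sInf { c | ∃ F : Set (Set ℕ), Centered F ∧
    (∀ A : Set ℕ, A.Infinite → ¬ LinQuasiOrdered ((fun B => B ∩ A) '' F)) ∧ c = #F }

/- ---------------- auxiliary lemmas ---------------- -/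

lemma starSubset_refl (A : Set ℕ) : StarSubset A A := by
  simp [StarSubset]

lemma starSubset_trans {A B C : Set ℕ} (h1 : StarSubset A B) (h2 : StarSubset B C) :
    StarSubset A C := by
  refine (h1.union h2).subset fun x hx => ?_
  by_cases hB : x ∈ B
  · exact Or.inr ⟨hB, hx.2⟩
  · exact Or.inl ⟨hx.1, hB⟩

/-- A finite nonempty subfamily of a `⊆*`-chain has a `⊆*`-least element. -/
lemma exists_star_min {F : Set (Set ℕ)}
    (hF : ∀ A ∈ F, ∀ B ∈ F, StarSubset A B ∨ StarSubset B A) :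
    ∀ G : Finset (Set ℕ), ↑G ⊆ F → G.Nonempty → ∃ M ∈ G, ∀ B ∈ G, StarSubset M B := by
  classical
  intro G
  induction G using Finset.induction_on with
  | empty => intro _ h; simp at h
  | @insert a G' ha ih =>
    intro hsub _
    have haF : a ∈ F := hsub (by simp)
    have hG'F : (↑G' : Set (Set ℕ)) ⊆ F := fun x hx => hsub (by simp at hx ⊢; exact Or.inr hx)
    by_cases hGe : G'.Nonempty
    · obtain ⟨M, hMG, hmin⟩ := ih hG'F hGe
      have hMF : M ∈ F := hG'F hMG
      rcases hF M hMF a haF with h | h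
      · refine ⟨M, Finset.mem_insert_of_mem hMG, fun B hB => ?_⟩
        rcases Finset.mem_insert.1 hB with rfl | hB'
        · exact h
        · exact hmin B hB'
      · refine ⟨a, Finset.mem_insert_self a G', fun B hB => ?_⟩
        rcases Finset.mem_insert.1 hB with rfl | hB'
        · exact starSubset_refl _
        · exact starSubset_trans h (hmin B hB')
    · rw [Finset.not_nonempty_iff_eq_empty] at hGe
      subst hGe
      refine ⟨a, by simp, fun B hB => ?_⟩
      rcases Finset.mem_insert.1 hB with rfl | hB'
      · exact starSubset_refl _
      · simp at hB'

/-- A `⊆*`-chain of infinite sets is centered. -/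
lemma linQuasiOrdered_centered {F : Set (Set ℕ)} (h : LinQuasiOrdered F) : Centered F := by
  intro G hG hne
  obtain ⟨M, hMG, hmin⟩ := exists_star_min h.2 G hG hne
  have hfin : (⋃ B ∈ G, M \ B).Finite :=
    Set.Finite.biUnion G.finite_toSet (fun B hB => hmin B hB)
  have hsub : M \ (⋃ B ∈ G, M \ B) ⊆ ⋂ B ∈ G, B := by
    intro x hx
    simp only [Set.mem_diff, Set.mem_iUnion, not_exists] at hx
    simp only [Set.mem_iInter]
    intro B hB
    by_contra hxB
    exact hx.2 B hB ⟨hx.1, hxB⟩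
  exact ((h.1 M (hG hMG)).diff hfin).mono hsub

/-- Every infinite set of naturals splits into two infinite pieces. -/
lemma exists_split {A : Set ℕ} (hA : A.Infinite) :
    ∃ B, B ⊆ A ∧ B.Infinite ∧ (A \ B).Infinite := by
  have hA' : {n | n ∈ A}.Infinite := hA
  set f := Nat.nth (· ∈ A) with hf
  have hinj : Function.Injective f := (Nat.nth_strictMono hA').injective
  have hmem : ∀ n, f n ∈ A := fun n => Nat.nth_mem_of_infinite hA' n
  refine ⟨f '' {n | Even n}, ?_, ?_, ?_⟩
  · rintro _ ⟨n, _, rfl⟩; exact hmem n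
  · have hev : ({n | Even n} : Set ℕ).Infinite :=
      Set.infinite_of_injective_forall_mem (f := fun n => 2 * n)
        (fun a b h => by dsimp at h; omega) (fun n => even_two_mul n)
    exact hev.image hinj.injOn
  · have hodds : ({n | ¬ Even n} : Set ℕ).Infinite :=
      Set.infinite_of_injective_forall_mem (f := fun n => 2 * n + 1)
        (fun a b h => by dsimp at h; omega) (fun n => by simp [Nat.even_add_one, parity_simps])
    refine (hodds.image hinj.injOn).mono ?_
    rintro _ ⟨n, hn, rfl⟩
    refine ⟨hmem n, ?_⟩
    rintro ⟨m, hm, hmn⟩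
    exact hn (hinj hmn ▸ hm)

lemma not_starSubset_of_infinite_diff {P X Y : Set ℕ} (hP : P.Infinite) (h : P ⊆ X \ Y) :
    ¬ StarSubset X Y := fun hf => hP (hf.subset h)

lemma incomparable {X Y PX PY : Set ℕ} (hPX : PX.Infinite) (hPY : PY.Infinite)
    (h1 : PX ⊆ X \ Y) (h2 : PY ⊆ Y \ X)
    (h : StarSubset X Y ∨ StarSubset Y X) : False := by
  rcases h with h | h
  · exact not_starSubset_of_infinite_diff hPX h1 h
  · exact not_starSubset_of_infinite_diff hPY h2 h

/-- If the `κ_{ωτ}`-property holds for `F`, then `F` has no pseudo-intersection. -/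
lemma kprop_noPI {F : Set (Set ℕ)}
    (hK : ∀ A : Set ℕ, A.Infinite → ¬ LinQuasiOrdered ((fun B => B ∩ A) '' F)) :
    ¬ HasPseudoIntersection F := by
  rintro ⟨A, hAinf, hPI⟩
  refine hK A hAinf ⟨?_, ?_⟩
  · rintro _ ⟨B, hB, rfl⟩
    have hfin : (A \ (B ∩ A)).Finite :=
      (hPI B hB).subset (fun x hx => ⟨hx.1, fun h => hx.2 ⟨h, hx.1⟩⟩)
    refine (hAinf.diff hfin).mono ?_
    intro x hx
    by_contra hc
    exact hx.2 ⟨hx.1, hc⟩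
  · rintro _ ⟨B, hB, rfl⟩ _ ⟨C, hC, rfl⟩
    left
    refine (hPI C hC).subset fun x hx => ?_
    exact ⟨hx.1.2, fun h => hx.2 ⟨h, hx.1.2⟩⟩

/-- A pseudo-intersection of the restricted family gives one of the original family. -/
lemma hasPI_of_image {F : Set (Set ℕ)} {A : Set ℕ}
    (h : HasPseudoIntersection ((fun B => B ∩ A) '' F)) : HasPseudoIntersection F := by
  obtain ⟨C, hC, hPI⟩ := h
  refine ⟨C, hC, fun B hB => (hPI _ ⟨B, hB, rfl⟩).subset fun x hx => ?_⟩
  exact ⟨hx.1, fun h' => hx.2 h'.1⟩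

/-- Adding an almost-subset of everything to a `⊆*`-chain keeps it a chain. -/
lemma linQuasiOrdered_insert {M : Set (Set ℕ)} (hM : LinQuasiOrdered M) {X : Set ℕ}
    (hX : X.Infinite) (h : ∀ C ∈ M, StarSubset X C) : LinQuasiOrdered (insert X M) := by
  constructor
  · intro A hA
    rcases Set.mem_insert_iff.1 hA with rfl | hA'
    · exact hX
    · exact hM.1 A hA'
  · intro A hA B hB
    rcases Set.mem_insert_iff.1 hA with rfl | hA' <;>
      rcases Set.mem_insert_iff.1 hB with rfl | hB'
    · exact Or.inl (starSubset_refl _)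
    · exact Or.inl (h B hB')
    · exact Or.inr (h A hA')
    · exact hM.2 A hA' B hB'

/-- There exists a `⊆*`-chain of infinite sets with no pseudo-intersection (a maximal
chain, obtained by Zorn's lemma, works). -/
lemma tWitness_exists : ∃ F : Set (Set ℕ), LinQuasiOrdered F ∧ ¬ HasPseudoIntersection F := by
  have hchainH : ∀ c ⊆ {F : Set (Set ℕ) | LinQuasiOrdered F}, IsChain (· ⊆ ·) c →
      c.Nonempty → ∃ ub ∈ {F : Set (Set ℕ) | LinQuasiOrdered F}, ∀ s ∈ c, s ⊆ ub := by
    intro c hc hchain hcne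
    refine ⟨⋃₀ c, ⟨?_, ?_⟩, fun s hs => Set.subset_sUnion_of_mem hs⟩
    · rintro A ⟨F, hFc, hAF⟩
      exact (hc hFc).1 A hAF
    · rintro A ⟨F1, hF1, hAF1⟩ B ⟨F2, hF2, hBF2⟩
      rcases hchain.total hF1 hF2 with h | h
      · exact (hc hF2).2 A (h hAF1) B hBF2
      · exact (hc hF1).2 A hAF1 B (h hBF2)
  have hbase : ({Set.univ} : Set (Set ℕ)) ∈ {F : Set (Set ℕ) | LinQuasiOrdered F} := by
    constructor
    · intro A hA
      rw [Set.mem_singleton_iff] at hA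
      subst hA
      exact Set.infinite_univ
    · intro A hA B hB
      rw [Set.mem_singleton_iff] at hA hB
      subst hA; subst hB
      exact Or.inl (starSubset_refl _)
  obtain ⟨M, -, hM⟩ := zorn_subset_nonempty {F : Set (Set ℕ) | LinQuasiOrdered F}
    hchainH {Set.univ} hbase
  refine ⟨M, hM.prop, ?_⟩
  rintro ⟨A, hAinf, hPI⟩
  obtain ⟨A1, hA1A, hA1inf, hA2inf⟩ := exists_split hAinf
  have hins : ∀ X : Set ℕ, X ⊆ A → X.Infinite → X ∈ M := by
    intro X hXA hXinf
    have hlin : LinQuasiOrdered (insert X M) :=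
      linQuasiOrdered_insert hM.prop hXinf
        (fun C hC => (hPI C hC).subset fun x hx => ⟨hXA hx.1, hx.2⟩)
    exact hM.2 hlin (Set.subset_insert X M) (Set.mem_insert X M)
  have h1 : A1 ∈ M := hins A1 hA1A hA1inf
  have h2 : A \ A1 ∈ M := hins (A \ A1) Set.diff_subset hA2inf
  refine incomparable hA1inf hA2inf ?_ ?_ (hM.prop.2 A1 h1 (A \ A1) h2)
  · exact fun x hx => ⟨hx, fun h => h.2 hx⟩
  · exact fun x hx => ⟨hx, hx.2⟩

/-- There is a witness for `κ_{ωτ}` (a non-principal ultrafilter works). -/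
lemma kWitness_exists : ∃ F : Set (Set ℕ), Centered F ∧
    (∀ A : Set ℕ, A.Infinite → ¬ LinQuasiOrdered ((fun B => B ∩ A) '' F)) := by
  classical
  set U := Filter.hyperfilter ℕ with hUdef
  refine ⟨{B | B ∈ U}, ?_, ?_⟩
  · intro G hG hne
    have hmem : (⋂ B ∈ G, B) ∈ U :=
      (Filter.biInter_finset_mem G).2 (fun B hB => hG hB)
    intro hfin
    exact Filter.notMem_hyperfilter_of_finite hfin hmem
  · intro A hAinf hLin
    by_cases hA : A ∈ U
    · -- split A into four infinite pieces P1, A1\P1, P3, (A\A1)\P3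
      obtain ⟨A1, hA1A, hA1inf, hA2inf⟩ := exists_split hAinf
      obtain ⟨P1, hP1A1, hP1inf, hP2inf⟩ := exists_split hA1inf
      obtain ⟨P3, hP3A2, hP3inf, hP4inf⟩ := exists_split hA2inf
      have keyX : ∀ X : Set ℕ, X ⊆ A → (X ∪ Aᶜ) ∈ U →
          X ∈ (fun B => B ∩ A) '' {B | B ∈ U} := by
        intro X hXA hmem
        refine ⟨X ∪ Aᶜ, hmem, ?_⟩
        ext x
        simp only [Set.mem_inter_iff, Set.mem_union, Set.mem_compl_iff]
        constructor
        · rintro ⟨h1 | h1, h2⟩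
          · exact h1
          · exact absurd h2 h1
        · intro hx; exact ⟨Or.inl hx, hXA hx⟩
      have hdec : ∀ X : Set ℕ, (X ∪ Aᶜ) ∈ U ∨ ((A \ X) ∪ Aᶜ) ∈ U := by
        intro X
        rcases U.mem_or_compl_mem (X ∪ Aᶜ) with h | h
        · exact Or.inl h
        · right
          refine Filter.mem_of_superset h ?_
          intro x hx
          simp only [Set.mem_compl_iff, Set.mem_union, not_or, not_not] at hx
          exact Or.inl ⟨hx.2, hx.1⟩
      have hYsubA : P1 ∪ P3 ⊆ A :=
        Set.union_subset (hP1A1.trans hA1A) (hP3A2.trans Set.diff_subset)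
      rcases hdec A1 with hX | hX
      · rcases hdec (P1 ∪ P3) with hY | hY
        · -- X = A1, Y = P1 ∪ P3
          refine incomparable hP2inf hP3inf ?_ ?_
            (hLin.2 _ (keyX A1 hA1A hX) _ (keyX (P1 ∪ P3) hYsubA hY))
          · rintro x ⟨h1, h2⟩
            exact ⟨h1, fun h => h.elim h2 (fun h3 => (hP3A2 h3).2 h1)⟩
          · intro x h
            exact ⟨Or.inr h, (hP3A2 h).2⟩
        · -- X = A1, Y = A \ (P1 ∪ P3)
          refine incomparable hP1inf hP4inf ?_ ?_
            (hLin.2 _ (keyX A1 hA1A hX) _ (keyX (A \ (P1 ∪ P3)) Set.diff_subset hY))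
          · intro x h
            exact ⟨hP1A1 h, fun hy => hy.2 (Or.inl h)⟩
          · rintro x ⟨⟨hA', hnA1⟩, hnP3⟩
            exact ⟨⟨hA', fun h => h.elim (fun h1 => hnA1 (hP1A1 h1)) hnP3⟩, hnA1⟩
      · rcases hdec (P1 ∪ P3) with hY | hY
        · -- X = A \ A1, Y = P1 ∪ P3
          refine incomparable hP4inf hP1inf ?_ ?_
            (hLin.2 _ (keyX (A \ A1) Set.diff_subset hX) _ (keyX (P1 ∪ P3) hYsubA hY))
          · rintro x ⟨h1, h2⟩
            exact ⟨h1, fun h => h.elim (fun hp => h1.2 (hP1A1 hp)) h2⟩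
          · intro x h
            exact ⟨Or.inl h, fun hy => hy.2 (hP1A1 h)⟩
        · -- X = A \ A1, Y = A \ (P1 ∪ P3)
          refine incomparable hP3inf hP2inf ?_ ?_
            (hLin.2 _ (keyX (A \ A1) Set.diff_subset hX) _
              (keyX (A \ (P1 ∪ P3)) Set.diff_subset hY))
          · intro x h
            exact ⟨hP3A2 h, fun hy => hy.2 (Or.inr h)⟩
          · rintro x ⟨h1, h2⟩
            exact ⟨⟨hA1A h1, fun h => h.elim h2 (fun hp => (hP3A2 hp).2 h1)⟩,
              fun hy => hy.2 h1⟩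
    · -- A ∉ U : the empty set is in the restricted family
      have hAc : Aᶜ ∈ U := Ultrafilter.compl_mem_iff_notMem.2 hA
      have hmem : (∅ : Set ℕ) ∈ (fun B => B ∩ A) '' {B | B ∈ U} :=
        ⟨Aᶜ, hAc, by simp⟩
      exact (hLin.1 ∅ hmem) Set.finite_empty

/-- 𝔭 = min {κ_{ωτ}, 𝔱}. -/
theorem stmt5 : pNum = min kappaOmegaTau tNum := by
  classical
  obtain ⟨F0, hF0c, hF0k⟩ := kWitness_exists
  obtain ⟨T0, hT0l, hT0n⟩ := tWitness_exists
  have hKne : { c | ∃ F : Set (Set ℕ), Centered F ∧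
      (∀ A : Set ℕ, A.Infinite → ¬ LinQuasiOrdered ((fun B => B ∩ A) '' F)) ∧
      c = #F }.Nonempty := ⟨#F0, F0, hF0c, hF0k, rfl⟩
  have hTne : { c | ∃ F : Set (Set ℕ), LinQuasiOrdered F ∧ ¬ HasPseudoIntersection F ∧
      c = #F }.Nonempty := ⟨#T0, T0, hT0l, hT0n, rfl⟩
  have hSne : { c | ∃ F : Set (Set ℕ), Centered F ∧ ¬ HasPseudoIntersection F ∧
      c = #F }.Nonempty := ⟨#F0, F0, hF0c, kprop_noPI hF0k, rfl⟩
  refine le_antisymm (le_min ?_ ?_) ?_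
  · -- pNum ≤ kappaOmegaTau
    obtain ⟨F, hc, hk, he⟩ := csInf_mem hKne
    have h1 : pNum ≤ #F := csInf_le' ⟨F, hc, kprop_noPI hk, rfl⟩
    have hke : kappaOmegaTau = #F := he
    rw [hke]; exact h1
  · -- pNum ≤ tNum
    obtain ⟨F, hl, hn, he⟩ := csInf_mem hTne
    have h1 : pNum ≤ #F := csInf_le' ⟨F, linQuasiOrdered_centered hl, hn, rfl⟩
    have hte : tNum = #F := he
    rw [hte]; exact h1
  · -- min ≤ pNum
    obtain ⟨F, hc, hn, he⟩ := csInf_mem hSne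
    have hpe : pNum = #F := he
    by_cases hk : ∀ A : Set ℕ, A.Infinite → ¬ LinQuasiOrdered ((fun B => B ∩ A) '' F)
    · have h1 : kappaOmegaTau ≤ #F := csInf_le' ⟨F, hc, hk, rfl⟩
      exact (min_le_left _ _).trans (h1.trans_eq hpe.symm)
    · push_neg at hk
      obtain ⟨A, hAinf, hLin⟩ := hk
      have hGn : ¬ HasPseudoIntersection ((fun B => B ∩ A) '' F) :=
        fun h => hn (hasPI_of_image h)
      have h1 : tNum ≤ #((fun B => B ∩ A) '' F) := csInf_le' ⟨_, hLin, hGn, rfl⟩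
      exact (min_le_right _ _).trans ((h1.trans Cardinal.mk_image_le).trans_eq hpe.symm)
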